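/- arXiv:2102.05903 — 4 statements merged into one kernel-verified Lean document; each statement's English description precedes it below -/
import Mathlib

section
/- Let J be a symmetric positive definite 2×2 real matrix with entries J11, J22 and off-diagonal J12, let L = J^{-1}, and let α1, α2 > 0 with α1 + α2 = 1. Write L11 = J22/Δ, L22 = J11/Δ, and the off-diagonal of L as -J12/Δ, where Δ = det J > 0. Then the matrix H = L - diag(α1, α2) is positive definite if and only if J11 < 1/α1, J22 < 1/α2, and J12² < (1/α1 - J11)(1/α2 - J22). -/
/-!
Write `u = 1/α₁ - J₁₁`, `v = 1/α₂ - J₂₂` and `Δ = det J`. By the `2 × 2` criterion, `H` is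
positive definite iff `H₁₁ = α₁ (J₂₂ u + J₁₂²) / Δ` and `det H = α₁ α₂ (u v - J₁₂²) / Δ` are
positive. Then `u` and `v` have the same sign, and both negative is impossible: `u v > J₁₂² > -J₂₂ u`
would give `v < -J₂₂`, i.e. `1/α₂ < 0`.
-/

open Matrix

theorem Matrix.inv_fin_two {K : Type*} [Field K] (A : Matrix (Fin 2) (Fin 2) K) :
    A⁻¹ = A.det⁻¹ • !![A 1 1, -A 0 1; -A 1 0, A 0 0] := by
  rw [inv_def, adjugate_fin_two, Ring.inverse_eq_inv']

theorem Matrix.posDef_fin_two_iff {M : Matrix (Fin 2) (Fin 2) ℝ} (hM : M.IsHermitian) :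
    M.PosDef ↔ 0 < M 0 0 ∧ 0 < M.det := by
  have hsymm : M 1 0 = M 0 1 := by simpa using hM.apply 0 1
  have quad (x : Fin 2 → ℝ) : star x ⬝ᵥ (M *ᵥ x) =
      M 0 0 * x 0 ^ 2 + 2 * M 0 1 * x 0 * x 1 + M 1 1 * x 1 ^ 2 := by
    simp only [star_trivial, dotProduct, mulVec, Fin.sum_univ_two, hsymm]
    ring
  rw [posDef_iff_dotProduct_mulVec, det_fin_two, hsymm]
  simp only [hM, true_and, quad]
  constructor
  · intro hpos
    have h00 : 0 < M 0 0 := by simpa using hpos (x := ![1, 0]) (by simp)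
    -- the form at `(-M₀₁, M₀₀)` equals `M₀₀ * det M`
    have hdet := hpos (x := ![-M 0 1, M 0 0]) (by simp [h00.ne'])
    simp only [cons_val_zero, cons_val_one] at hdet
    exact ⟨h00, by nlinarith⟩
  · rintro ⟨h00, hdet⟩ x hx
    -- completing the square: `M₀₀ q(x) = (M₀₀ x₀ + M₀₁ x₁)² + det M · x₁²`
    rcases eq_or_ne (x 1) 0 with h1 | h1
    · have h0 : x 0 ≠ 0 := fun h0 => hx (funext fun i => by fin_cases i <;> assumption)
      simp only [h1]
      nlinarith [sq_pos_of_ne_zero h0]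
    · nlinarith [sq_nonneg (M 0 0 * x 0 + M 0 1 * x 1), mul_pos hdet (sq_pos_of_ne_zero h1)]

theorem pos_and_sq_lt_mul_iff {K : Type*} [Field K] [LinearOrder K] [IsStrictOrderedRing K]
    {u v b c : K} (hc : 0 < c) (hvc : 0 < v + c) :
    0 < c * u + b ^ 2 ∧ b ^ 2 < u * v ↔ 0 < u ∧ 0 < v ∧ b ^ 2 < u * v := by
  constructor
  · rintro ⟨hcu, huv⟩
    have hu : 0 < u := by
      by_contra! hu
      have hu' : u < 0 := lt_of_le_of_ne hu fun h => by nlinarith [sq_nonneg b]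
      nlinarith
    exact ⟨hu, pos_of_mul_pos_right (by nlinarith [sq_nonneg b]) hu.le, huv⟩
  · rintro ⟨hu, -, huv⟩
    exact ⟨by positivity, huv⟩

theorem high_temp_characterisation_two_groups_general
    (J : Matrix (Fin 2) (Fin 2) ℝ) (hJpd : J.PosDef)
    (α1 α2 : ℝ) (hα1 : 0 < α1) (hα2 : 0 < α2) :
    (J⁻¹ - Matrix.diagonal ![α1, α2]).PosDef ↔
      (J 0 0 < 1 / α1 ∧ J 1 1 < 1 / α2 ∧
        (J 0 1) ^ 2 < (1 / α1 - J 0 0) * (1 / α2 - J 1 1)) := by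
  have hJ := hJpd.isHermitian
  have hsymm : J 1 0 = J 0 1 := by simpa using hJ.apply 0 1
  obtain ⟨h00, hdet⟩ := (posDef_fin_two_iff hJ).1 hJpd
  have hdet_eq : J.det = J 0 0 * J 1 1 - J 0 1 ^ 2 := by rw [det_fin_two, hsymm]; ring
  have h11 : 0 < J 1 1 := by nlinarith [sq_nonneg (J 0 1)]
  set H := J⁻¹ - diagonal ![α1, α2]
  have hH : H.IsHermitian := hJ.inv.sub (isHermitian_diagonal _)
  have hH_eq : H = !![J 1 1 / J.det - α1, -J 0 1 / J.det; -J 0 1 / J.det, J 0 0 / J.det - α2] := by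
    ext i j
    fin_cases i <;> fin_cases j <;> simp [H, inv_fin_two, hsymm, div_eq_inv_mul]
  have hH00 : J 1 1 / J.det - α1 = α1 / J.det * (J 1 1 * (1 / α1 - J 0 0) + J 0 1 ^ 2) := by
    field_simp; rw [hdet_eq]; ring
  have hHdet : (J 1 1 / J.det - α1) * (J 0 0 / J.det - α2) - -J 0 1 / J.det * (-J 0 1 / J.det) =
      α1 * α2 / J.det * ((1 / α1 - J 0 0) * (1 / α2 - J 1 1) - J 0 1 ^ 2) := by
    field_simp; rw [hdet_eq]; ring
  rw [posDef_fin_two_iff hH, hH_eq, det_fin_two_of, of_apply, cons_val', cons_val_zero,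
    cons_val_zero, hHdet, hH00, mul_pos_iff_of_pos_left (by positivity),
    mul_pos_iff_of_pos_left (by positivity), sub_pos, pos_and_sq_lt_mul_iff h11 (by simpa using hα2),
    sub_pos, sub_pos]

/-- Characterisation of the high temperature regime for two groups:
`H = J⁻¹ - diag(α₁, α₂)` is positive definite iff
`J₁₁ < 1/α₁`, `J₂₂ < 1/α₂` and `J₁₂² < (1/α₁ - J₁₁)(1/α₂ - J₂₂)`. -/
theorem high_temp_characterisation_two_groups
    (J : Matrix (Fin 2) (Fin 2) ℝ) (hJsymm : J.IsSymm) (hJpd : J.PosDef)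
    (α1 α2 : ℝ) (hα1 : 0 < α1) (hα2 : 0 < α2) (hsum : α1 + α2 = 1) :
    (J⁻¹ - Matrix.diagonal ![α1, α2]).PosDef ↔
      (J 0 0 < 1 / α1 ∧ J 1 1 < 1 / α2 ∧
        (J 0 1) ^ 2 < (1 / α1 - J 0 0) * (1 / α2 - J 1 1)) :=
  high_temp_characterisation_two_groups_general J hJpd α1 α2 hα1 hα2
end

section
/- For β ≥ 0, the equation tanh(βx) = x has x = 0 as its unique real solution if and only if β ≤ 1; if β > 1, there are exactly three solutions -x1, 0, x1 with x1 ∈ (0,1). -/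
/-!
`tanh` is odd and strictly concave on `[0, ∞)` with `tanh 0 = 0` and `tanh' 0 = 1`, so its chord
slope `tanh t / t` decreases strictly on `(0, ∞)` and stays below `1`. A positive root `x` of
`tanh (β x) = x` is a point `t = β x` where this slope equals `1 / β`: there is none when `β ≤ 1`,
and at most one otherwise. For `β > 1` one exists by the intermediate value theorem, since
`tanh (β x) - x` has derivative `β - 1 > 0` at `0` and is negative at `x = 1`.
-/

open Real Set Topology

namespace Real

theorem hasDerivAt_tanh (x : ℝ) : HasDerivAt tanh (1 - tanh x ^ 2) x := by
  have hcosh : cosh x ≠ 0 := (cosh_pos x).ne'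
  have h := (hasDerivAt_sinh x).div (hasDerivAt_cosh x) hcosh
  rw [show (sinh / cosh : ℝ → ℝ) = tanh from funext fun y => (tanh_eq_sinh_div_cosh y).symm] at h
  refine h.congr_deriv ?_
  rw [tanh_eq_sinh_div_cosh]
  field_simp

theorem deriv_tanh : deriv tanh = fun x => 1 - tanh x ^ 2 :=
  funext fun x => (hasDerivAt_tanh x).deriv

theorem continuous_tanh : Continuous tanh :=
  continuous_iff_continuousAt.2 fun x => (hasDerivAt_tanh x).continuousAt

theorem strictMono_tanh : StrictMono tanh :=
  strictMono_of_deriv_pos fun x => by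
    rw [deriv_tanh, sub_pos]
    exact tanh_sq_lt_one x

theorem tanh_pos {x : ℝ} (hx : 0 < x) : 0 < tanh x := by
  simpa using strictMono_tanh hx

theorem tanh_lt_self {x : ℝ} (hx : 0 < x) : tanh x < x := by
  have hmono : StrictMonoOn (fun t => t - tanh t) (Ici 0) := by
    refine strictMonoOn_of_deriv_pos (convex_Ici 0)
      (continuous_id.sub continuous_tanh).continuousOn fun t ht => ?_
    rw [interior_Ici] at ht
    have hd : HasDerivAt (fun t => t - tanh t) (1 - (1 - tanh t ^ 2)) t :=
      (hasDerivAt_id' t).sub (hasDerivAt_tanh t)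
    rw [hd.deriv]
    have ht_pos := tanh_pos ht
    nlinarith
  simpa using hmono self_mem_Ici hx.le hx

theorem strictConcaveOn_tanh : StrictConcaveOn ℝ (Ici 0) tanh := by
  refine StrictAntiOn.strictConcaveOn_of_deriv (convex_Ici 0) continuous_tanh.continuousOn ?_
  rw [interior_Ici, deriv_tanh]
  intro a ha b _ hab
  have ha_pos := tanh_pos ha
  have hab' := strictMono_tanh hab
  simp only
  nlinarith

theorem strictAntiOn_tanh_div_self : StrictAntiOn (fun x => tanh x / x) (Ioi 0) := by
  intro x hx y hy hxy
  simpa using strictConcaveOn_tanh.secant_strict_mono self_mem_Ici (Ioi_subset_Ici_self hx)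
    (Ioi_subset_Ici_self hy) hx.ne' (ne_of_gt hy) hxy

end Real

theorem tanh_mul_abs_eq_abs_iff {β x : ℝ} : tanh (β * |x|) = |x| ↔ tanh (β * x) = x := by
  rcases abs_cases x with ⟨h, _⟩ | ⟨h, _⟩
  · rw [h]
  · rw [h, mul_neg, tanh_neg, neg_inj]

theorem tanh_mul_lt_self {β x : ℝ} (hβ : β ≤ 1) (hx : 0 < x) : tanh (β * x) < x :=
  calc tanh (β * x) ≤ tanh x := strictMono_tanh.monotone (by nlinarith)
    _ < x := tanh_lt_self hx

theorem tanh_mul_eq_self_iff_of_le_one {β : ℝ} (hβ : β ≤ 1) (x : ℝ) :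
    tanh (β * x) = x ↔ x = 0 := by
  refine ⟨fun h => ?_, fun h => by simp [h]⟩
  by_contra hx
  have hlt := tanh_mul_lt_self hβ (abs_pos.2 hx)
  rw [tanh_mul_abs_eq_abs_iff.2 h] at hlt
  exact lt_irrefl _ hlt

theorem eq_of_tanh_mul_eq_self {β a b : ℝ} (ha : 0 < a) (hb : 0 < b)
    (hroot_a : tanh (β * a) = a) (hroot_b : tanh (β * b) = b) : a = b := by
  have hβ : 0 < β := by
    by_contra! hβ
    have hle := strictMono_tanh.monotone (mul_nonpos_of_nonpos_of_nonneg hβ ha.le)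
    rw [tanh_zero, hroot_a] at hle
    linarith
  have hslope : tanh (β * a) / (β * a) = tanh (β * b) / (β * b) := by
    rw [hroot_a, hroot_b]
    field_simp
  exact mul_left_cancel₀ hβ.ne'
    (strictAntiOn_tanh_div_self.injOn (mul_pos hβ ha) (mul_pos hβ hb) hslope)

theorem eventually_lt_tanh_mul {β : ℝ} (hβ : 1 < β) : ∀ᶠ x in 𝓝[>] 0, x < tanh (β * x) := by
  have hderiv : HasDerivAt (fun x => tanh (β * x) - x) (β - 1) 0 := by
    have := ((hasDerivAt_tanh (β * 0)).comp 0 ((hasDerivAt_id' 0).const_mul β)).sub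
      (hasDerivAt_id' 0)
    exact this.congr_deriv (by simp)
  have hsign := eventually_nhdsWithin_sign_eq_of_deriv_pos
    (by rw [hderiv.deriv]; linarith) (by simp)
  filter_upwards [nhdsWithin_le_nhds hsign, self_mem_nhdsWithin] with x hsign hx
  rw [sub_zero, sign_pos (mem_Ioi.1 hx)] at hsign
  exact sub_pos.1 (sign_eq_one_iff.1 hsign)

theorem exists_mem_Ioo_tanh_mul_eq_self {β : ℝ} (hβ : 1 < β) :
    ∃ x ∈ Ioo (0 : ℝ) 1, tanh (β * x) = x := by
  obtain ⟨ε, hε_lt, hε_pos⟩ := ((eventually_lt_tanh_mul hβ).and self_mem_nhdsWithin).exists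
  have hcont : ContinuousOn (fun x => tanh (β * x) - x) (Icc ε 1) :=
    ((continuous_tanh.comp (continuous_const.mul continuous_id)).sub continuous_id).continuousOn
  obtain ⟨x, hx, hroot⟩ := intermediate_value_Icc' (hε_lt.trans (tanh_lt_one _)).le hcont
    (show (0 : ℝ) ∈ Icc _ _ from ⟨by simpa using (tanh_lt_one β).le, by linarith⟩)
  rw [sub_eq_zero] at hroot
  exact ⟨x, ⟨lt_of_lt_of_le hε_pos hx.1, hroot ▸ tanh_lt_one _⟩, hroot⟩

theorem tanh_mul_eq_self_iff_of_pos_root {β x1 : ℝ} (hx1 : 0 < x1)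
    (hroot : tanh (β * x1) = x1) (x : ℝ) : tanh (β * x) = x ↔ x = -x1 ∨ x = 0 ∨ x = x1 := by
  rcases eq_or_ne x 0 with rfl | hx
  · simp
  rw [← tanh_mul_abs_eq_abs_iff]
  constructor
  · intro h
    rcases (abs_eq hx1.le).1 (eq_of_tanh_mul_eq_self (abs_pos.2 hx) hx1 h hroot) with h | h
    <;> simp [h]
  · rintro (rfl | rfl | rfl)
    · rwa [abs_neg, abs_of_pos hx1]
    · exact absurd rfl hx
    · rwa [abs_of_pos hx1]

theorem curie_weiss_equation_solutions_general (β : ℝ) :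
    ((∀ x : ℝ, Real.tanh (β * x) = x ↔ x = 0) ↔ β ≤ 1) ∧
      (1 < β → ∃ x1 : ℝ, x1 ∈ Set.Ioo (0 : ℝ) 1 ∧
        ∀ x : ℝ, Real.tanh (β * x) = x ↔ (x = -x1 ∨ x = 0 ∨ x = x1)) := by
  refine ⟨⟨fun h => ?_, tanh_mul_eq_self_iff_of_le_one⟩, fun hβ => ?_⟩
  · by_contra! hβ
    obtain ⟨x1, hx1, hroot⟩ := exists_mem_Ioo_tanh_mul_eq_self hβ
    exact hx1.1.ne' ((h x1).1 hroot)
  · obtain ⟨x1, hx1, hroot⟩ := exists_mem_Ioo_tanh_mul_eq_self hβ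
    exact ⟨x1, hx1, tanh_mul_eq_self_iff_of_pos_root hx1.1 hroot⟩

/-- The Curie-Weiss equation `tanh (β x) = x`, for `β ≥ 0`, has `0` as its unique real
solution iff `β ≤ 1`; and for `β > 1` there are exactly three solutions
`-x₁, 0, x₁` with `x₁ ∈ (0, 1)`. -/
theorem curie_weiss_equation_solutions (β : ℝ) (hβ : 0 ≤ β) :
    ((∀ x : ℝ, Real.tanh (β * x) = x ↔ x = 0) ↔ β ≤ 1) ∧
      (1 < β → ∃ x1 : ℝ, x1 ∈ Set.Ioo (0 : ℝ) 1 ∧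
        ∀ x : ℝ, Real.tanh (β * x) = x ↔ (x = -x1 ∨ x = 0 ∨ x = x1)) :=
  curie_weiss_equation_solutions_general β
end

section
/- Define F: ℝ^M → ℝ by F(y) = (1/2) yᵀ L y - Σ_λ α_λ ln cosh(y_λ), where L is symmetric positive definite and α_λ ≥ 0. If H = L - diag(α_1,…,α_M) is positive semi-definite, then the origin is the unique global minimum of F. -/
/-!
Splitting `L = H + diag α` gives `F y = ½ yᵀ H y + Σ_λ α_λ (y_λ² / 2 - ln cosh y_λ)`, and every
summand is nonnegative because `cosh t ≤ exp (t² / 2)`, strictly so for `t ≠ 0`. If some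
`α_λ ln cosh y_λ` is nonzero, the corresponding summand is positive; otherwise
`F y = ½ yᵀ L y > 0`.
-/

open Matrix Real

namespace Real

-- Compare the power series termwise: `(2n)! ≥ 2ⁿ n!`, with strict inequality at `n = 2`.
lemma cosh_lt_exp_half_sq {x : ℝ} (hx : x ≠ 0) : cosh x < exp (x ^ 2 / 2) := by
  rw [cosh_eq_tsum, exp_eq_exp_ℝ, NormedSpace.exp_eq_tsum ℝ]
  refine x.hasSum_cosh.summable.tsum_lt_tsum (i := 2) (fun i ↦ ?_) ?_
    (NormedSpace.expSeries_summable' (x ^ 2 / 2))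
  · simp only [div_pow, pow_mul, smul_eq_mul, inv_mul_eq_div, div_div]
    gcongr
    norm_cast
    exact Nat.two_pow_mul_factorial_le_factorial_two_mul _
  · have hx4 : 0 < x ^ 4 := by positivity
    norm_num [Nat.factorial]
    linarith

lemma log_cosh_le_sq_div_two (x : ℝ) : log (cosh x) ≤ x ^ 2 / 2 :=
  (log_le_iff_le_exp (cosh_pos x)).2 (cosh_le_exp_half_sq x)

lemma log_cosh_lt_sq_div_two {x : ℝ} (hx : x ≠ 0) : log (cosh x) < x ^ 2 / 2 :=
  (log_lt_iff_lt_exp (cosh_pos x)).2 (cosh_lt_exp_half_sq hx)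

lemma sum_mul_log_cosh_lt {ι : Type*} [Fintype ι] {α y : ι → ℝ} (hα : ∀ i, 0 ≤ α i)
    (h : ∑ i, α i * log (cosh (y i)) ≠ 0) :
    ∑ i, α i * log (cosh (y i)) < (∑ i, α i * y i ^ 2) / 2 := by
  obtain ⟨j, -, hj⟩ := Finset.exists_ne_zero_of_sum_ne_zero h
  have hαj : 0 < α j := (hα j).lt_of_ne' (left_ne_zero_of_mul hj)
  have hyj : y j ≠ 0 := by
    rintro hyj
    simp [hyj] at hj
  rw [Finset.sum_div]
  refine Finset.sum_lt_sum (fun i _ ↦ ?_) ⟨j, Finset.mem_univ j, ?_⟩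
  · rw [mul_div_assoc]
    exact mul_le_mul_of_nonneg_left (log_cosh_le_sq_div_two _) (hα i)
  · rw [mul_div_assoc]
    exact mul_lt_mul_of_pos_left (log_cosh_lt_sq_div_two hyj) hαj

end Real

lemma Matrix.dotProduct_mulVec_eq_sub_diagonal_add {ι R : Type*} [Fintype ι] [DecidableEq ι]
    [CommRing R] (A : Matrix ι ι R) (d y : ι → R) :
    y ⬝ᵥ A *ᵥ y = y ⬝ᵥ (A - diagonal d) *ᵥ y + ∑ i, d i * y i ^ 2 := by
  have hdiag : y ⬝ᵥ diagonal d *ᵥ y = ∑ i, d i * y i ^ 2 :=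
    Finset.sum_congr rfl fun i _ ↦ by rw [mulVec_diagonal]; ring
  rw [sub_mulVec, dotProduct_sub, hdiag, sub_add_cancel]

theorem F_unique_global_minimum_at_origin_general
    (M : ℕ) (L : Matrix (Fin M) (Fin M) ℝ) (hLpd : L.PosDef)
    (α : Fin M → ℝ) (hα : ∀ lam, 0 ≤ α lam)
    (hH : (L - Matrix.diagonal α).PosSemidef) :
    ∀ y : Fin M → ℝ, y ≠ 0 →
      ((1 / 2) * ((0 : Fin M → ℝ) ⬝ᵥ L.mulVec 0)
          - ∑ lam, α lam * Real.log (Real.cosh ((0 : Fin M → ℝ) lam)))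
        < (1 / 2) * (y ⬝ᵥ L.mulVec y) - ∑ lam, α lam * Real.log (Real.cosh (y lam)) := by
  intro y hy
  simp only [mulVec_zero, dotProduct_zero, Pi.zero_apply, cosh_zero, log_one, mul_zero,
    Finset.sum_const_zero, sub_zero]
  have hLy : 0 < y ⬝ᵥ L *ᵥ y := hLpd.dotProduct_mulVec_pos hy
  have hHy : 0 ≤ y ⬝ᵥ (L - diagonal α) *ᵥ y := hH.dotProduct_mulVec_nonneg y
  by_cases hS : ∑ lam, α lam * log (cosh (y lam)) = 0
  · rw [hS]
    linarith
  · have hS_lt := sum_mul_log_cosh_lt hα hS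
    rw [dotProduct_mulVec_eq_sub_diagonal_add L α y]
    linarith

/-- If `H = L - diag(α)` is positive semi-definite (with `L` symmetric positive definite
and `α ≥ 0`), then the origin is the unique global minimum of
`F(y) = ½ yᵀ L y - Σ_λ α_λ ln cosh y_λ`. -/
theorem F_unique_global_minimum_at_origin
    (M : ℕ) (L : Matrix (Fin M) (Fin M) ℝ) (hLsymm : L.IsSymm) (hLpd : L.PosDef)
    (α : Fin M → ℝ) (hα : ∀ lam, 0 ≤ α lam)
    (hH : (L - Matrix.diagonal α).PosSemidef) :
    ∀ y : Fin M → ℝ, y ≠ 0 →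
      ((1 / 2) * ((0 : Fin M → ℝ) ⬝ᵥ L.mulVec 0)
          - ∑ lam, α lam * Real.log (Real.cosh ((0 : Fin M → ℝ) lam)))
        < (1 / 2) * (y ⬝ᵥ L.mulVec y) - ∑ lam, α lam * Real.log (Real.cosh (y lam)) :=
  F_unique_global_minimum_at_origin_general M L hLpd α hα hH
end

section
/- Let N, L ∈ ℕ, and let r = (r_1,…,r_L) be a profile vector (non-negative integers with Σ_{ℓ=1}^L ℓ·r_ℓ = L) with Σ_ℓ r_ℓ ≤ N. Set r_0 := N - Σ_{ℓ=1}^L r_ℓ. Then the number of multiindices i ∈ {1,…,N}^L whose profile ρ(i) equals r is N!/(r_1! r_2! ⋯ r_L! r_0!) · L!/(1!^{r_1} 2!^{r_2} ⋯ L!^{r_L}). -/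
/-!
Record for a multiindex `i` its value multiplicities `c j = #{k | i k = j}`; the profile of `i`
is the fiber-count profile of `c : Fin N → {0, …, L}`, which takes the value `ℓ` exactly `r_ℓ`
times (and `0` exactly `r₀` times). Both levels are one multinomial count: the functions
`α → β` with prescribed fiber sizes `k` form a single orbit of `Perm α` acting on the domain,
with stabilizer `∏ b, Perm (fiber b)`, so there are `|α|! / ∏ b, (k b)!` of them. Hence there
are `N! / (r₀! r₁! ⋯ r_L!)` choices of `c`, and for each of them
`L! / ∏ j, (c j)! = L! / ∏ ℓ, (ℓ!)^{r_ℓ}` multiindices `i`.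
-/

open Finset Equiv

section FiberCard

variable {α β : Type*} [Fintype α] [DecidableEq β]

def fiberCard (f : α → β) (b : β) : ℕ := #{a | f a = b}

def funsWithFiberCard [DecidableEq α] (t : Finset β) (k : β → ℕ) : Finset (α → β) :=
  {f ∈ Fintype.piFinset fun _ => t | ∀ b ∈ t, fiberCard f b = k b}

lemma fiberCard_le (f : α → β) (b : β) : fiberCard f b ≤ Fintype.card α :=
  card_filter_le _ _

lemma fiberCard_eq_card_subtype (f : α → β) (b : β) :
    fiberCard f b = Fintype.card {a // f a = b} :=
  (Fintype.card_subtype _).symm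

lemma fiberCard_comp_of_injective {γ : Type*} [DecidableEq γ] (f : α → β) {φ : β → γ}
    (hφ : φ.Injective) (b : β) : fiberCard (φ ∘ f) (φ b) = fiberCard f b := by
  simp only [fiberCard, Function.comp_apply, hφ.eq_iff]

lemma fiberCard_comp_perm (f : α → β) (σ : Perm α) : fiberCard (f ∘ σ) = fiberCard f :=
  funext fun b => by
    simp only [fiberCard_eq_card_subtype]
    exact Fintype.card_congr (σ.subtypeEquiv fun _ => Iff.rfl)

@[to_additive]
lemma prod_comp_eq_prod_pow_fiberCard {M : Type*} [CommMonoid M] (f : α → β) (t : Finset β)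
    (hf : ∀ a, f a ∈ t) (g : β → M) : ∏ a, g (f a) = ∏ b ∈ t, g b ^ fiberCard f b := by
  rw [← prod_fiberwise_of_maps_to fun a _ => hf a]
  refine prod_congr rfl fun b _ => ?_
  rw [prod_congr rfl fun a ha => by rw [(mem_filter.mp ha).2], prod_const]
  rfl

lemma sum_fiberCard (f : α → β) (t : Finset β) (hf : ∀ a, f a ∈ t) :
    ∑ b ∈ t, fiberCard f b = Fintype.card α := by
  simpa using (sum_comp_eq_sum_nsmul_fiberCard f t hf fun _ => (1 : ℕ)).symm

lemma exists_fiberCard_eq [Fintype β] (k : β → ℕ) (hk : ∑ b, k b = Fintype.card α) :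
    ∃ f : α → β, fiberCard f = k := by
  obtain ⟨e⟩ : Nonempty (α ≃ Σ b, Fin (k b)) := Fintype.card_eq.mp (by simp [hk])
  refine ⟨fun a => (e a).1, funext fun b => ?_⟩
  rw [fiberCard_eq_card_subtype,
    Fintype.card_congr ((e.subtypeEquiv fun _ => Iff.rfl).trans (sigmaSubtype b)),
    Fintype.card_fin]

lemma exists_perm_comp_eq_iff_fiberCard_eq {f g : α → β} :
    (∃ σ : Perm α, f ∘ σ = g) ↔ fiberCard f = fiberCard g := by
  refine ⟨fun ⟨σ, hσ⟩ => hσ ▸ (fiberCard_comp_perm f σ).symm, fun h => ?_⟩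
  have e : ∀ b, {a // g a = b} ≃ {a // f a = b} := fun b =>
    Fintype.equivOfCardEq (by rw [← fiberCard_eq_card_subtype, ← fiberCard_eq_card_subtype, h])
  exact ⟨(sigmaFiberEquiv g).symm.trans ((sigmaCongrRight e).trans (sigmaFiberEquiv f)),
    funext fun a => (e (g a) ⟨a, rfl⟩).2⟩

theorem card_fiberCard_eq_mul_prod_factorial [DecidableEq α] [Fintype β] (k : β → ℕ)
    (hk : ∑ b, k b = Fintype.card α) :
    #{f : α → β | fiberCard f = k} * ∏ b, (k b).factorial = (Fintype.card α).factorial := by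
  obtain ⟨f₀, rfl⟩ := exists_fiberCard_eq k hk
  have horbit : MulAction.orbit (Perm α)ᵈᵐᵃ f₀ = {f | fiberCard f = fiberCard f₀} := by
    ext f
    rw [MulAction.mem_orbit_iff, Set.mem_ofPred, eq_comm, ← exists_perm_comp_eq_iff_fiberCard_eq]
    exact DomMulAct.mk.symm.exists_congr_left
  have hstab : Nat.card (MulAction.stabilizer (Perm α)ᵈᵐᵃ f₀)
      = ∏ b, (fiberCard f₀ b).factorial := by
    rw [Nat.card_congr (subtypeEquiv (q := fun g : Perm α => f₀ ∘ g = f₀) DomMulAct.mk.symm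
      fun _ => DomMulAct.mem_stabilizer_iff), Nat.card_eq_fintype_card, DomMulAct.stabilizer_card]
    simp only [fiberCard_eq_card_subtype]
  have := (MulAction.stabilizer (Perm α)ᵈᵐᵃ f₀).card_mul_index
  rw [MulAction.index_stabilizer, horbit, hstab, Nat.card_congr DomMulAct.mk.symm,
    Nat.card_perm, Nat.card_eq_fintype_card] at this
  rw [← this, mul_comm, Set.ncard_eq_toFinset_card', Set.toFinset_ofPred]

theorem card_funsWithFiberCard_mul_prod_factorial [DecidableEq α] (t : Finset β) (k : β → ℕ)
    (hk : ∑ b ∈ t, k b = Fintype.card α) :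
    #(funsWithFiberCard t k : Finset (α → β)) * ∏ b ∈ t, (k b).factorial
      = (Fintype.card α).factorial := by
  have h := card_fiberCard_eq_mul_prod_factorial (β := t) (fun b => k b)
    (by rw [sum_coe_sort]; exact hk)
  rw [prod_coe_sort t fun b => (k b).factorial] at h
  rw [← h]
  congr 1
  rw [← card_map ⟨(Subtype.val ∘ ·), Subtype.val_injective.comp_left⟩]
  congr 1
  ext f
  simp only [funsWithFiberCard, mem_filter, Fintype.mem_piFinset, mem_univ, true_and, mem_map,
    Function.Embedding.coeFn_mk]
  constructor
  · rintro ⟨hf, hfk⟩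
    refine ⟨fun a => ⟨f a, hf a⟩, funext fun b => ?_, rfl⟩
    rw [← hfk b b.2, ← fiberCard_comp_of_injective _ Subtype.val_injective]
    rfl
  · rintro ⟨g, hg, rfl⟩
    exact ⟨fun a => (g a).2, fun b hb =>
      (fiberCard_comp_of_injective g Subtype.val_injective ⟨b, hb⟩).trans (congrFun hg ⟨b, hb⟩)⟩

end FiberCard

theorem card_fiberCard_eq_mul_prod_factorial_pow {α β : Type*} [Fintype α] [DecidableEq α]
    [Fintype β] [DecidableEq β] {t : Finset ℕ} {k : ℕ → ℕ} {c : β → ℕ}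
    (hc : c ∈ (funsWithFiberCard t k : Finset (β → ℕ))) (hk : ∑ ℓ ∈ t, k ℓ • ℓ = Fintype.card α) :
    #{i : α → β | fiberCard i = c} * ∏ ℓ ∈ t, ℓ.factorial ^ k ℓ
      = (Fintype.card α).factorial := by
  simp only [funsWithFiberCard, mem_filter, Fintype.mem_piFinset] at hc
  obtain ⟨hct, hck⟩ := hc
  have hsum : ∑ j, c j = Fintype.card α := calc
    ∑ j, c j = ∑ ℓ ∈ t, fiberCard c ℓ • ℓ := sum_comp_eq_sum_nsmul_fiberCard c t hct id
    _ = Fintype.card α := by rw [← hk]; exact sum_congr rfl fun ℓ hℓ => by rw [hck ℓ hℓ]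
  have hprod : ∏ j, (c j).factorial = ∏ ℓ ∈ t, ℓ.factorial ^ k ℓ := calc
    ∏ j, (c j).factorial = ∏ ℓ ∈ t, ℓ.factorial ^ fiberCard c ℓ :=
      prod_comp_eq_prod_pow_fiberCard c t hct Nat.factorial
    _ = ∏ ℓ ∈ t, ℓ.factorial ^ k ℓ := prod_congr rfl fun ℓ hℓ => by rw [hck ℓ hℓ]
  rw [← hprod]
  exact card_fiberCard_eq_mul_prod_factorial c hsum

section Profile

/-- The paper's `(r₀, r₁, …, r_L)`: `r₀ = N - Σ r_ℓ` counts the values that do not occur. -/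
def fullProfile (N L : ℕ) (r : ℕ → ℕ) : ℕ → ℕ :=
  Function.update r 0 (N - ∑ ℓ ∈ Icc 1 L, r ℓ)

variable {N L : ℕ} {r : ℕ → ℕ}

lemma fullProfile_zero : fullProfile N L r 0 = N - ∑ ℓ ∈ Icc 1 L, r ℓ :=
  Function.update_self ..

lemma fullProfile_of_mem_Icc {ℓ : ℕ} (hℓ : ℓ ∈ Icc 1 L) : fullProfile N L r ℓ = r ℓ :=
  Function.update_of_ne (by simp only [mem_Icc] at hℓ; omega) _ _

@[to_additive]
lemma prod_Icc_zero_fullProfile {M : Type*} [CommMonoid M] (g : ℕ → ℕ → M) :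
    ∏ ℓ ∈ Icc 0 L, g ℓ (fullProfile N L r ℓ)
      = g 0 (N - ∑ ℓ ∈ Icc 1 L, r ℓ) * ∏ ℓ ∈ Icc 1 L, g ℓ (r ℓ) := by
  rw [← mul_prod_Ioc_eq_prod_Icc L.zero_le, ← Icc_add_one_left_eq_Ioc, zero_add]
  rw [fullProfile_zero, prod_congr rfl fun ℓ hℓ => by rw [fullProfile_of_mem_Icc hℓ]]

variable {α β : Type*} [Fintype α] [Fintype β] [DecidableEq β]

lemma fiberCard_fiberCard_zero (i : α → β) :
    fiberCard (fiberCard i) 0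
      = Fintype.card β - ∑ ℓ ∈ Icc 1 (Fintype.card α), fiberCard (fiberCard i) ℓ := by
  have := sum_fiberCard (fiberCard i) (Icc 0 (Fintype.card α)) (by simp [fiberCard_le])
  rw [← add_sum_Ioc_eq_sum_Icc (Nat.zero_le _), ← Icc_add_one_left_eq_Ioc, zero_add] at this
  omega

lemma fiberCard_mem_funsWithFiberCard_iff (i : α → β) :
    fiberCard i ∈ (funsWithFiberCard (Icc 0 (Fintype.card α))
        (fullProfile (Fintype.card β) (Fintype.card α) r) : Finset (β → ℕ))
      ↔ ∀ ℓ ∈ Icc 1 (Fintype.card α), fiberCard (fiberCard i) ℓ = r ℓ := by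
  simp only [funsWithFiberCard, mem_filter, Fintype.mem_piFinset]
  constructor
  · rintro ⟨-, h⟩ ℓ hℓ
    exact (h ℓ (Icc_subset_Icc_left zero_le_one hℓ)).trans (fullProfile_of_mem_Icc hℓ)
  · intro h
    refine ⟨fun b => by simp [fiberCard_le], fun ℓ hℓ => ?_⟩
    rcases Nat.eq_zero_or_pos ℓ with rfl | hpos
    · rw [fiberCard_fiberCard_zero, sum_congr rfl h, fullProfile_zero]
    · have hℓ' : ℓ ∈ Icc 1 (Fintype.card α) := by simp only [mem_Icc] at hℓ ⊢; omega
      rw [h ℓ hℓ', fullProfile_of_mem_Icc hℓ']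

end Profile

open scoped Classical

theorem card_multiindices_with_profile_general (N L : ℕ)
    (r : ℕ → ℕ) (hr : ∑ ℓ ∈ Finset.Icc 1 L, ℓ * r ℓ = L)
    (hrN : ∑ ℓ ∈ Finset.Icc 1 L, r ℓ ≤ N) :
    (Finset.univ.filter
        (fun i : Fin L → Fin N => ∀ ℓ ∈ Finset.Icc 1 L,
          (Finset.univ.filter
            (fun j : Fin N =>
              (Finset.univ.filter (fun k : Fin L => i k = j)).card = ℓ)).card = r ℓ)).card
      * ((∏ ℓ ∈ Finset.Icc 1 L, (r ℓ).factorial)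
          * (N - ∑ ℓ ∈ Finset.Icc 1 L, r ℓ).factorial
          * ∏ ℓ ∈ Finset.Icc 1 L, (ℓ.factorial) ^ (r ℓ))
      = N.factorial * L.factorial := by
  set C : Finset (Fin N → ℕ) := funsWithFiberCard (Icc 0 L) (fullProfile N L r)
  set P := ∏ ℓ ∈ Icc 1 L, ℓ.factorial ^ r ℓ
  have hS (i : Fin L → Fin N) :
      (∀ ℓ ∈ Icc 1 L, fiberCard (fiberCard i) ℓ = r ℓ) ↔ fiberCard i ∈ C := by
    simpa using (fiberCard_mem_funsWithFiberCard_iff (r := r) i).symm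
  have hfiber (c) (hc : c ∈ C) : #{i : Fin L → Fin N | fiberCard i = c} * P = L.factorial := by
    have hL : ∑ ℓ ∈ Icc 0 L, fullProfile N L r ℓ • ℓ = Fintype.card (Fin L) := by
      simpa [sum_Icc_zero_fullProfile, mul_comm] using hr
    simpa [prod_Icc_zero_fullProfile, P] using card_fiberCard_eq_mul_prod_factorial_pow hc hL
  have hC : #C * ((∏ ℓ ∈ Icc 1 L, (r ℓ).factorial) * (N - ∑ ℓ ∈ Icc 1 L, r ℓ).factorial)
      = N.factorial := by
    have hN : ∑ ℓ ∈ Icc 0 L, fullProfile N L r ℓ = Fintype.card (Fin N) := by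
      simpa [sum_Icc_zero_fullProfile (g := fun _ n => n)] using Nat.sub_add_cancel hrN
    simpa [prod_Icc_zero_fullProfile (g := fun _ n => n.factorial), mul_comm]
      using card_funsWithFiberCard_mul_prod_factorial _ _ hN
  change #{i : Fin L → Fin N | ∀ ℓ ∈ Icc 1 L, fiberCard (fiberCard i) ℓ = r ℓ} * _ = _
  simp only [hS]
  rw [← sum_card_fiberwise_eq_card_filter, mul_comm _ P, ← mul_assoc, sum_mul,
    sum_congr rfl hfiber, sum_const, smul_eq_mul, ← hC]
  ring

/-- The number of multiindices `i ∈ {1,…,N}^L` with a given profile `r`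
(`r ℓ` values occur exactly `ℓ` times, `Σ ℓ r_ℓ = L`) equals
`N!/(r₁!⋯r_L! r₀!) · L!/(1!^{r₁}⋯L!^{r_L})` where `r₀ = N - Σ r_ℓ`;
stated multiplicatively to avoid division. -/
theorem card_multiindices_with_profile (N L : ℕ) (hN : 0 < N) (hL : 0 < L)
    (r : ℕ → ℕ) (hr : ∑ ℓ ∈ Finset.Icc 1 L, ℓ * r ℓ = L)
    (hrN : ∑ ℓ ∈ Finset.Icc 1 L, r ℓ ≤ N) :
    (Finset.univ.filter
        (fun i : Fin L → Fin N => ∀ ℓ ∈ Finset.Icc 1 L,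
          (Finset.univ.filter
            (fun j : Fin N =>
              (Finset.univ.filter (fun k : Fin L => i k = j)).card = ℓ)).card = r ℓ)).card
      * ((∏ ℓ ∈ Finset.Icc 1 L, (r ℓ).factorial)
          * (N - ∑ ℓ ∈ Finset.Icc 1 L, r ℓ).factorial
          * ∏ ℓ ∈ Finset.Icc 1 L, (ℓ.factorial) ^ (r ℓ))
      = N.factorial * L.factorial :=
  card_multiindices_with_profile_general N L r hr hrN
end
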